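/- Let $\{b_k\}$ and $\{N_k\}$ be sequences of positive integers with $N_k \ge b_k \ge 2$, $b_k \mid N_k$. Suppose $B_k \subseteq \mathbb{Z}_{\ge 0}$ with $B_k \equiv \{0,\dots,b_k-1\}\pmod{N_k}$, and $\sum_k c_k/b_k < \infty$ where $c_k = \#(B_k\setminus\{0,\dots,b_k-1\})$. Then there exist $\varepsilon > 0$ and $n_0 \ge 1$ such that for all $n \ge n_0$ and all $\xi \in [-2/3,2/3]$, $\left|\prod_{k=1}^\infty m_{B_{n+k}}\left(\frac{\xi}{N_{n+1}\cdots N_{n+k}}\right)\right| \ge \varepsilon$, where $m_B(\xi) = \frac{1}{\#B}\sum_{b\in B}e^{-2\pi i b\xi}$. -/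

import Mathlib

/-!
Write `e(x) = exp(-2πixξ)`, `b = #B` and `c = #(B \ range b)`. Rotating `∑_{x<b} e(x)` by its
middle phase turns it into a sum of cosines, and `cos t ≥ 1 - t²/2` gives
`|∑_{x<b} e(x)| ≥ b (1 - (πbξ)²/6)`; replacing `range b` by `B` costs at most `2c`. Hence
`|m_B(ξ)| ≥ 1 - δ` with `δ = (πbξ)²/6 + 2c/b`. In the tail product the `k`-th frequency is
divided by `N_n ⋯ N_{n+k} ≥ 2^k b_{n+k}`, so `δ_k ≤ (2π²/27) 4^{-k} + 2c_{n+k}/b_{n+k}`: these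
are summable with sum bounded independently of `n`, and all `δ_k ≤ 4/5` once `c/b < 1/100` on the
tail. Then `1 - δ ≥ exp(-5δ)` bounds the product below; it converges because
`|m_B(ξ) - 1| ≤ 2πb|ξ| + 2c/b` is summable along the tail as well.
-/

open Filter Finset

/-- `maskFn B ξ = (1/#B) ∑_{x ∈ B} e^{-2πi x ξ}`, the Fourier transform of the
uniform discrete measure on `B`. -/
noncomputable def maskFn (B : Finset ℕ) (ξ : ℝ) : ℂ :=
  ((B.card : ℂ))⁻¹ * ∑ x ∈ B, Complex.exp (-2 * Real.pi * Complex.I * (x : ℂ) * (ξ : ℂ))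

open Real

section ExpSums

open Complex

lemma sum_range_sub_sq (m : ℕ) (t : ℝ) :
    ∑ x ∈ range m, ((x : ℝ) - t) ^ 2
      = m * (m - 1) * (2 * m - 1) / 6 - t * m * (m - 1) + m * t ^ 2 := by
  induction m with
  | zero => simp
  | succ m ih => rw [sum_range_succ, ih]; push_cast; ring

lemma norm_sum_range_exp_ge (m : ℕ) (θ : ℝ) :
    m * (1 - (m * θ) ^ 2 / 24) ≤ ‖∑ x ∈ range m, exp (↑(x * θ) * I)‖ := by
  set t : ℝ := (m - 1) / 2 with ht
  have hrot : (exp (↑(-(t * θ)) * I) * ∑ x ∈ range m, exp (↑(x * θ) * I)).re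
      = ∑ x ∈ range m, Real.cos ((x - t) * θ) := by
    rw [mul_sum, re_sum]
    refine sum_congr rfl fun x _ => ?_
    rw [← Complex.exp_add, ← add_mul, ← ofReal_add, exp_ofReal_mul_I_re]
    ring_nf
  have hcos : ∑ x ∈ range m, (1 - ((x - t) * θ) ^ 2 / 2) ≤ ∑ x ∈ range m, Real.cos ((x - t) * θ) :=
    sum_le_sum fun x _ => one_sub_sq_div_two_le_cos
  have hsq : ∑ x ∈ range m, (1 - ((x - t) * θ) ^ 2 / 2)
      = m - θ ^ 2 / 2 * ∑ x ∈ range m, ((x : ℝ) - t) ^ 2 := by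
    rw [sum_sub_distrib, sum_const, card_range, nsmul_one, mul_sum]
    exact congrArg _ (sum_congr rfl fun x _ => by ring)
  have hm : (0 : ℝ) ≤ m := m.cast_nonneg
  calc (m : ℝ) * (1 - (m * θ) ^ 2 / 24) ≤ m - θ ^ 2 / 2 * ∑ x ∈ range m, ((x : ℝ) - t) ^ 2 := by
        rw [sum_range_sub_sq, ht]; nlinarith [mul_nonneg hm (sq_nonneg θ)]
    _ ≤ _ := hsq ▸ hcos
    _ = (exp (↑(-(t * θ)) * I) * ∑ x ∈ range m, exp (↑(x * θ) * I)).re := hrot.symm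
    _ ≤ ‖∑ x ∈ range m, exp (↑(x * θ) * I)‖ :=
        (re_le_norm _).trans_eq (by rw [norm_mul, norm_exp_ofReal_mul_I, one_mul])

lemma norm_sum_range_exp_sub_le (m : ℕ) (θ : ℝ) :
    ‖∑ x ∈ range m, exp (↑(x * θ) * I) - m‖ ≤ m ^ 2 * |θ| := by
  have hterm : ∀ x ∈ range m, ‖exp (↑(x * θ) * I) - 1‖ ≤ m * |θ| := fun x hx => by
    rw [mul_comm _ I]
    refine norm_exp_I_mul_ofReal_sub_one_le.trans ?_
    rw [norm_mul, Real.norm_natCast, Real.norm_eq_abs]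
    gcongr
    exact (mem_range.1 hx).le
  calc ‖∑ x ∈ range m, exp (↑(x * θ) * I) - m‖ = ‖∑ x ∈ range m, (exp (↑(x * θ) * I) - 1)‖ := by
        simp [sum_sub_distrib]
    _ ≤ ∑ x ∈ range m, (m * |θ|) := norm_sum_le_of_le _ hterm
    _ = m ^ 2 * |θ| := by rw [sum_const, card_range, nsmul_eq_mul]; ring

lemma norm_sum_sub_sum_le {ι E : Type*} [DecidableEq ι] [SeminormedAddCommGroup E]
    (s t : Finset ι) {f : ι → E} (hf : ∀ i, ‖f i‖ ≤ 1) :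
    ‖∑ i ∈ s, f i - ∑ i ∈ t, f i‖ ≤ #(s \ t) + #(t \ s) := by
  rw [← sum_sdiff_sub_sum_sdiff]
  refine (norm_sub_le _ _).trans (add_le_add ?_ ?_) <;>
  simpa using norm_sum_le_of_le _ fun i _ => hf i

lemma maskFn_eq_inv_card_mul_sum (B : Finset ℕ) (ξ : ℝ) :
    maskFn B ξ = (#B : ℂ)⁻¹ * ∑ x ∈ B, exp (↑(x * (-2 * π * ξ)) * I) := by
  unfold maskFn
  congr 1
  refine sum_congr rfl fun x _ => ?_
  push_cast
  ring_nf

lemma norm_sum_sub_sum_range_card_le (B : Finset ℕ) (θ : ℝ) :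
    ‖∑ x ∈ B, exp (↑(x * θ) * I) - ∑ x ∈ range #B, exp (↑(x * θ) * I)‖ ≤ 2 * #(B \ range #B) := by
  have h := norm_sum_sub_sum_le B (range #B) fun x => (norm_exp_ofReal_mul_I (x * θ)).le
  rwa [card_sdiff_comm (card_range #B), ← two_mul] at h

lemma one_sub_le_norm_maskFn {B : Finset ℕ} (hB : B.Nonempty) {ξ ρ : ℝ} (hρ : #B * |ξ| ≤ ρ) :
    1 - (π * ρ) ^ 2 / 6 - 2 * #(B \ range #B) / #B ≤ ‖maskFn B ξ‖ := by
  have hb : (0 : ℝ) < #B := by exact_mod_cast hB.card_pos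
  have hR := norm_sum_range_exp_ge #B (-2 * π * ξ)
  have hBR := norm_sum_sub_sum_range_card_le B (-2 * π * ξ)
  set e : ℕ → ℂ := fun x => exp (↑(x * (-2 * π * ξ)) * I)
  have hθ : (#B * (-2 * π * ξ)) ^ 2 ≤ 4 * (π * ρ) ^ 2 :=
    calc (#B * (-2 * π * ξ)) ^ 2 = 4 * π ^ 2 * (#B * |ξ|) ^ 2 := by rw [mul_pow _ |ξ|, sq_abs]; ring
      _ ≤ 4 * π ^ 2 * ρ ^ 2 := by gcongr
      _ = 4 * (π * ρ) ^ 2 := by ring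
  have hA := norm_sub_le (∑ x ∈ B, e x) (∑ x ∈ B, e x - ∑ x ∈ range #B, e x)
  rw [sub_sub_cancel] at hA
  rw [maskFn_eq_inv_card_mul_sum, norm_mul, norm_inv, Complex.norm_natCast, inv_mul_eq_div,
    le_div_iff₀ hb, sub_mul, sub_mul, div_mul_cancel₀ _ hb.ne']
  nlinarith [mul_le_mul_of_nonneg_left hθ hb.le]

lemma norm_maskFn_sub_one_le {B : Finset ℕ} (hB : B.Nonempty) {ξ ρ : ℝ} (hρ : #B * |ξ| ≤ ρ) :
    ‖maskFn B ξ - 1‖ ≤ 2 * π * ρ + 2 * #(B \ range #B) / #B := by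
  have hb : (0 : ℝ) < #B := by exact_mod_cast hB.card_pos
  have hR := norm_sum_range_exp_sub_le #B (-2 * π * ξ)
  have hBR := norm_sum_sub_sum_range_card_le B (-2 * π * ξ)
  set e : ℕ → ℂ := fun x => exp (↑(x * (-2 * π * ξ)) * I)
  have hsplit : maskFn B ξ - 1 = (#B : ℂ)⁻¹ * ((∑ x ∈ B, e x - ∑ x ∈ range #B, e x)
      + (∑ x ∈ range #B, e x - #B)) := by
    rw [maskFn_eq_inv_card_mul_sum, sub_add_sub_cancel, mul_sub,
      inv_mul_cancel₀ (by exact_mod_cast hb.ne')]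
  have hθ : (#B : ℝ) ^ 2 * |-2 * π * ξ| ≤ #B * (2 * π * ρ) := by
    rw [abs_mul, abs_mul, abs_neg, abs_two, abs_of_pos pi_pos]
    nlinarith [mul_le_mul_of_nonneg_left hρ (by positivity : (0 : ℝ) ≤ 2 * π * #B)]
  rw [hsplit, norm_mul, norm_inv, Complex.norm_natCast, inv_mul_eq_div, div_le_iff₀ hb, add_mul,
    div_mul_cancel₀ _ hb.ne']
  linarith [norm_add_le (∑ x ∈ B, e x - ∑ x ∈ range #B, e x) (∑ x ∈ range #B, e x - #B)]

end ExpSums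

lemma pow_mul_le_prod_Icc {N : ℕ → ℕ} (hN : ∀ i, 2 ≤ N i) (n k : ℕ) :
    2 ^ k * N (n + k) ≤ ∏ i ∈ Icc n (n + k), N i := by
  induction k with
  | zero => simp
  | succ k ih =>
    rw [← add_assoc, prod_Icc_succ_top (by omega), pow_succ]
    exact Nat.mul_le_mul_right _ ((Nat.mul_le_mul_left _ (hN _)).trans ih)

lemma natCast_mul_abs_div_prod_Icc_le {b N : ℕ → ℕ} (hN : ∀ i, 2 ≤ N i) (hbN : ∀ i, b i ≤ N i)
    (ξ : ℝ) (n k : ℕ) :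
    (b (n + k) : ℝ) * |ξ / ∏ i ∈ Icc n (n + k), (N i : ℝ)| ≤ |ξ| * (1 / 2) ^ k := by
  have hP : (2 : ℝ) ^ k * b (n + k) ≤ ∏ i ∈ Icc n (n + k), (N i : ℝ) := by
    exact_mod_cast (Nat.mul_le_mul_left _ (hbN _)).trans (pow_mul_le_prod_Icc hN n k)
  have hPpos : 0 < ∏ i ∈ Icc n (n + k), (N i : ℝ) := prod_pos fun i _ => by
    have := hN i; positivity
  calc (b (n + k) : ℝ) * |ξ / ∏ i ∈ Icc n (n + k), (N i : ℝ)|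
      = |ξ| * (b (n + k) / ∏ i ∈ Icc n (n + k), (N i : ℝ)) := by
        rw [abs_div, abs_of_pos hPpos]; ring
    _ ≤ |ξ| * (1 / 2) ^ k := by
        gcongr
        rw [div_le_iff₀ hPpos]
        calc (b (n + k) : ℝ) = (1 / 2) ^ k * (2 ^ k * b (n + k)) := by
              rw [← mul_assoc, ← mul_pow]; norm_num
          _ ≤ (1 / 2) ^ k * ∏ i ∈ Icc n (n + k), (N i : ℝ) := by gcongr

lemma exp_neg_div_le_one_sub {x a : ℝ} (hx : 0 ≤ x) (hxa : x ≤ a) (ha : a < 1) :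
    exp (-(x / (1 - a))) ≤ 1 - x := by
  have h1 : 0 < 1 - x := by linarith
  calc exp (-(x / (1 - a))) ≤ exp (1 - (1 - x)⁻¹) := by
        gcongr
        rw [show 1 - (1 - x)⁻¹ = -(x / (1 - x)) by field_simp; ring, neg_le_neg_iff]
        exact div_le_div_of_nonneg_left hx (by linarith) (by linarith)
    _ ≤ exp (log (1 - x)) := exp_le_exp.2 (one_sub_inv_le_log_of_pos h1)
    _ = 1 - x := exp_log h1

lemma exp_neg_tsum_div_le_norm_tprod {ι E : Type*} [SeminormedCommRing E] [NormMulClass E]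
    [NormOneClass E] {f : ι → E} (hf : Multipliable f) {δ : ι → ℝ} (hδ : Summable δ) {a : ℝ}
    (hδ0 : ∀ i, 0 ≤ δ i) (hδa : ∀ i, δ i ≤ a) (ha : a < 1) (hfδ : ∀ i, 1 - δ i ≤ ‖f i‖) :
    exp (-(∑' i, δ i) / (1 - a)) ≤ ‖∏' i, f i‖ := by
  refine ge_of_tendsto hf.hasProd.norm (Eventually.of_forall fun s => ?_)
  have ha' : 0 < 1 - a := by linarith
  calc exp (-(∑' i, δ i) / (1 - a)) ≤ exp (-(∑ i ∈ s, δ i) / (1 - a)) := by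
        gcongr
        exact hδ.sum_le_tsum s fun i _ => hδ0 i
    _ = ∏ i ∈ s, exp (-(δ i / (1 - a))) := by rw [← exp_sum, sum_neg_distrib, neg_div, sum_div]
    _ ≤ ∏ i ∈ s, (1 - δ i) := prod_le_prod (fun _ _ => (exp_pos _).le)
        fun i _ => exp_neg_div_le_one_sub (hδ0 i) (hδa i) ha
    _ ≤ ∏ i ∈ s, ‖f i‖ := prod_le_prod (fun i _ => by linarith [hδa i]) fun i _ => hfδ i

lemma summable_geometric_add_nat_add {u : ℕ → ℝ} (hu : Summable u) (C r : ℝ) (hr0 : 0 ≤ r)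
    (hr1 : r < 1) (n : ℕ) : Summable fun k => C * r ^ k + u (n + k) :=
  ((summable_geometric_of_lt_one hr0 hr1).mul_left C).add
    (hu.comp_injective (add_right_injective n))

lemma tsum_geometric_add_nat_add_le {u : ℕ → ℝ} (hu : Summable u) (hu0 : ∀ k, 0 ≤ u k) (C r : ℝ)
    (hr0 : 0 ≤ r) (hr1 : r < 1) (n : ℕ) :
    ∑' k, (C * r ^ k + u (n + k)) ≤ C * (1 - r)⁻¹ + ∑' k, u k := by
  rw [Summable.tsum_add (f := fun k => C * r ^ k) (g := fun k => u (n + k))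
      ((summable_geometric_of_lt_one hr0 hr1).mul_left C)
      (hu.comp_injective (add_right_injective n)),
    tsum_mul_left, tsum_geometric_of_lt_one hr0 hr1]
  exact add_le_add_right (tsum_comp_le_tsum_of_inj hu hu0 (add_right_injective n)) _

theorem tail_fourier_transform_lower_bound_general
    (b N : ℕ → ℕ) (B : ℕ → Finset ℕ)
    (hb : ∀ k, 2 ≤ b k) (hbN : ∀ k, b k ≤ N k)
    (hBcard : ∀ k, (B k).card = b k)
    (c : ℕ → ℕ) (hc : ∀ k, c k = ((B k) \ Finset.range (b k)).card)
    (hsum : Summable (fun k => (c k : ℝ) / (b k : ℝ))) :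
    ∃ ε > (0 : ℝ), ∃ n₀ : ℕ, ∀ n ≥ n₀, ∀ ξ ∈ Set.Icc (-(2 : ℝ) / 3) (2 / 3),
      ε ≤ ‖∏' k : ℕ, maskFn (B (n + k))
            (ξ / ∏ i ∈ Finset.Icc n (n + k), (N i : ℝ))‖ := by
  simp only [hc, ← hBcard] at hb hbN hsum
  set u : ℕ → ℝ := fun k => 2 * #(B k \ range #(B k)) / #(B k)
  have hu : Summable u := by simpa only [u, mul_div_assoc] using hsum.mul_left 2
  have hu0 : ∀ k, 0 ≤ u k := fun k => by positivity
  obtain ⟨n₀, hn₀⟩ := eventually_atTop.1 (hu.tendsto_atTop_zero.eventually_lt_const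
    (by norm_num : (0 : ℝ) < 1 / 50))
  refine ⟨exp (-(2 * π ^ 2 / 27 * (1 - 1 / 4)⁻¹ + ∑' k, u k) / (1 - 4 / 5)), exp_pos _, n₀,
    fun n hn ξ hξ => ?_⟩
  have hξ' : |ξ| ≤ 2 / 3 := abs_le.2 ⟨by linarith [hξ.1], hξ.2⟩
  have hBne : ∀ k, (B k).Nonempty := fun k => card_pos.1 (by linarith [hb k])
  have hρ : ∀ k, (#(B (n + k)) : ℝ) * |ξ / ∏ i ∈ Icc n (n + k), (N i : ℝ)| ≤ 2 / 3 * (1 / 2) ^ k :=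
    fun k => (natCast_mul_abs_div_prod_Icc_le (fun i => (hb i).trans (hbN i)) hbN ξ n k).trans
      (by gcongr)
  have hmult : Multipliable fun k => maskFn (B (n + k)) (ξ / ∏ i ∈ Icc n (n + k), (N i : ℝ)) := by
    refine (multipliable_one_add_of_summable (Summable.of_nonneg_of_le (fun _ => norm_nonneg _)
      (fun k => norm_maskFn_sub_one_le (hBne _) (hρ k))
      ((summable_geometric_add_nat_add hu (4 * π / 3) (1 / 2) (by norm_num) (by norm_num) n).congr
        fun k => by ring))).congr fun k => by ring
  have hquarter : ∀ k, (π * (2 / 3 * (1 / 2) ^ k)) ^ 2 / 6 = 2 * π ^ 2 / 27 * (1 / 4) ^ k :=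
    fun k => by rw [mul_pow, mul_pow, ← pow_mul, mul_comm k, pow_mul]; ring
  refine (exp_le_exp.2 ?_).trans (exp_neg_tsum_div_le_norm_tprod (a := 4 / 5) hmult
    (summable_geometric_add_nat_add hu (2 * π ^ 2 / 27) (1 / 4) (by norm_num) (by norm_num) n)
    (fun k => by positivity) (fun k => ?_) (by norm_num) (fun k => ?_))
  · gcongr; exact tsum_geometric_add_nat_add_le hu hu0 _ _ (by norm_num) (by norm_num) n
  · have := hn₀ (n + k) (by omega)
    have : ((1 : ℝ) / 4) ^ k ≤ 1 := pow_le_one₀ (by norm_num) (by norm_num)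
    nlinarith [pi_lt_d2, pi_pos]
  · simpa only [← hquarter, ← sub_sub] using one_sub_le_norm_maskFn (hBne _) (hρ k)

/-- Uniform lower bound for the Fourier transforms of the tail measures `ν_{>n}`:
the infinite product `∏_{k≥1} m_{B_{n+k}}(ξ/(N_{n+1}⋯N_{n+k}))` is uniformly bounded
below on `[-2/3, 2/3]` for all large `n`. -/
theorem tail_fourier_transform_lower_bound
    (b N : ℕ → ℕ) (B : ℕ → Finset ℕ)
    (hb : ∀ k, 2 ≤ b k) (hbN : ∀ k, b k ≤ N k) (hdvd : ∀ k, b k ∣ N k)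
    (hBcard : ∀ k, (B k).card = b k)
    (hBmod : ∀ k, (B k).image (fun x => x % N k) = Finset.range (b k))
    (c : ℕ → ℕ) (hc : ∀ k, c k = ((B k) \ Finset.range (b k)).card)
    (hsum : Summable (fun k => (c k : ℝ) / (b k : ℝ))) :
    ∃ ε > (0 : ℝ), ∃ n₀ : ℕ, ∀ n ≥ n₀, ∀ ξ ∈ Set.Icc (-(2 : ℝ) / 3) (2 / 3),
      ε ≤ ‖∏' k : ℕ, maskFn (B (n + k))
            (ξ / ∏ i ∈ Finset.Icc n (n + k), (N i : ℝ))‖ :=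
  tail_fourier_transform_lower_bound_general b N B hb hbN hBcard c hc hsum
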